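/- Bayes-ratio representation of the conditional mediator density ratio: for discrete random variables L, A₀, ..., A_t, M₀, ..., M_t with joint pmf p and all relevant conditional probabilities positive, p(M_t | L, ā_t, M̄_{t-1}) / p(M_t | L, Ā_t, M̄_{t-1}) = ∏_{j=0}^{t} [p(a_j | L, ā_{j-1}, M̄_t) / p(a_j | L, ā_{j-1}, M̄_{t-1})] · [p(A_j | L, Ā_{j-1}, M̄_{t-1}) / p(A_j | L, Ā_{j-1}, M̄_t)], where ā_t denotes a fixed exposure history and Ā_t, M̄_t denote the observed histories. -/
import Mathlib


attribute [local instance] Classical.propDecidable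

noncomputable section

/-- Probability of an event under pmf `w` on a finite sample space. -/
def Pr {Ω : Type} [Fintype Ω] (w : Ω → ℝ) (E : Ω → Prop) : ℝ :=
  ∑ ω, if E ω then w ω else 0

/-- Conditional probability `P(E | F)`. -/
def cPr {Ω : Type} [Fintype Ω] (w : Ω → ℝ) (E F : Ω → Prop) : ℝ :=
  Pr w (fun ω => E ω ∧ F ω) / Pr w F

/-- Expectation of a real random variable. -/
def Exp {Ω : Type} [Fintype Ω] (w : Ω → ℝ) (Y : Ω → ℝ) : ℝ :=
  ∑ ω, Y ω * w ω

/-- Conditional expectation `E[Y | F]`. -/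
def cExp {Ω : Type} [Fintype Ω] (w : Ω → ℝ) (Y : Ω → ℝ) (F : Ω → Prop) : ℝ :=
  (∑ ω, if F ω then Y ω * w ω else 0) / Pr w F

private lemma Pr_mono' {Ω : Type} [Fintype Ω] (w : Ω → ℝ) (hw : ∀ ω, 0 ≤ w ω)
    {E F : Ω → Prop} (h : ∀ ω, E ω → F ω) : Pr w E ≤ Pr w F := by
  unfold Pr
  apply Finset.sum_le_sum
  intro ω _
  by_cases hE : E ω
  · simp [hE, h ω hE]
  · by_cases hF : F ω <;> simp [hE, hF, hw ω]

private lemma Pr_congr' {Ω : Type} [Fintype Ω] (w : Ω → ℝ)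
    {E F : Ω → Prop} (h : ∀ ω, E ω ↔ F ω) : Pr w E = Pr w F := by
  unfold Pr
  exact Finset.sum_congr rfl fun ω _ => by rw [if_congr (h ω) rfl rfl]

private lemma final_algebra (T : ℕ) (qFa qPa qFb qPb : ℕ → ℝ)
    (hFa : ∀ k, 0 < qFa k) (hPa : ∀ k, 0 < qPa k)
    (hFb : ∀ k, 0 < qFb k) (hPb : ∀ k, 0 < qPb k)
    (h0F : qFa 0 = qFb 0) (h0P : qPa 0 = qPb 0) :
    qFa T / qPa T / (qFb T / qPb T)
      = ∏ j : Fin T,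
          (qFa ((j : ℕ) + 1) / qFa (j : ℕ) / (qPa ((j : ℕ) + 1) / qPa (j : ℕ)))
            * (qPb ((j : ℕ) + 1) / qPb (j : ℕ) / (qFb ((j : ℕ) + 1) / qFb (j : ℕ))) := by
  have hconv :
      (∏ j : Fin T,
          (qFa ((j : ℕ) + 1) / qFa (j : ℕ) / (qPa ((j : ℕ) + 1) / qPa (j : ℕ)))
            * (qPb ((j : ℕ) + 1) / qPb (j : ℕ) / (qFb ((j : ℕ) + 1) / qFb (j : ℕ))))
        = ∏ k ∈ Finset.range T,
          (qFa (k + 1) / qFa k / (qPa (k + 1) / qPa k))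
            * (qPb (k + 1) / qPb k / (qFb (k + 1) / qFb k)) :=
    Fin.prod_univ_eq_prod_range
      (fun k => (qFa (k + 1) / qFa k / (qPa (k + 1) / qPa k))
            * (qPb (k + 1) / qPb k / (qFb (k + 1) / qFb k))) T
  rw [hconv]
  have main : ∀ n, (∏ k ∈ Finset.range n,
          (qFa (k + 1) / qFa k / (qPa (k + 1) / qPa k))
            * (qPb (k + 1) / qPb k / (qFb (k + 1) / qFb k)))
      = ((qFa n / qFa 0) / (qPa n / qPa 0)) * ((qPb n / qPb 0) / (qFb n / qFb 0)) := by
    intro n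
    induction n with
    | zero =>
        simp [div_self (hFa 0).ne', div_self (hPa 0).ne', div_self (hFb 0).ne',
          div_self (hPb 0).ne']
    | succ n ih =>
        rw [Finset.prod_range_succ, ih]
        field_simp [(hFa 0).ne', (hPa 0).ne', (hFb 0).ne', (hPb 0).ne',
          (hFa n).ne', (hPa n).ne', (hFb n).ne', (hPb n).ne',
          (hFa (n+1)).ne', (hPa (n+1)).ne', (hFb (n+1)).ne', (hPb (n+1)).ne']
  rw [main T, h0F, h0P]
  field_simp [(hFa T).ne', (hPa T).ne', (hFb T).ne', (hPb T).ne',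
    (hFb 0).ne', (hPb 0).ne']

/-- Bayes-ratio representation of the conditional mediator density ratio:
`p(M_t | L, ā_t, M̄_{t-1}) / p(M_t | L, Ā_t, M̄_{t-1})
  = ∏_j [p(a_j | L, ā_{j-1}, M̄_t) / p(a_j | L, ā_{j-1}, M̄_{t-1})]
      · [p(A_j | L, Ā_{j-1}, M̄_{t-1}) / p(A_j | L, Ā_{j-1}, M̄_t)]`. -/
theorem mediator_density_ratio_bayes
    {Ω 𝓛 𝓐 𝓜 : Type} [Fintype Ω] (t : ℕ)
    (w : Ω → ℝ) (hw : ∀ ω, 0 ≤ w ω) (hw1 : ∑ ω, w ω = 1)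
    (L : Ω → 𝓛) (A : Fin (t + 1) → Ω → 𝓐) (M : Fin (t + 1) → Ω → 𝓜)
    (abar : Fin (t + 1) → 𝓐)
    -- positivity: all relevant conditional probabilities are positive
    (hpos : ∀ (ℓ : 𝓛) (f : Fin (t + 1) → 𝓐) (g : Fin (t + 1) → 𝓜),
      0 < Pr w (fun ω => L ω = ℓ ∧ (∀ j, A j ω = f j) ∧ (∀ j, M j ω = g j))) :
    ∀ ω : Ω,
      cPr w (fun ω' => M (Fin.last t) ω' = M (Fin.last t) ω)
          (fun ω' => L ω' = L ω ∧ (∀ j, A j ω' = abar j)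
            ∧ (∀ j : Fin (t + 1), (j : ℕ) < t → M j ω' = M j ω))
        / cPr w (fun ω' => M (Fin.last t) ω' = M (Fin.last t) ω)
            (fun ω' => L ω' = L ω ∧ (∀ j, A j ω' = A j ω)
              ∧ (∀ j : Fin (t + 1), (j : ℕ) < t → M j ω' = M j ω))
      = ∏ j : Fin (t + 1),
          (cPr w (fun ω' => A j ω' = abar j)
              (fun ω' => L ω' = L ω ∧ (∀ i, i < j → A i ω' = abar i)
                ∧ (∀ i, M i ω' = M i ω))
            / cPr w (fun ω' => A j ω' = abar j)
                (fun ω' => L ω' = L ω ∧ (∀ i, i < j → A i ω' = abar i)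
                  ∧ (∀ i : Fin (t + 1), (i : ℕ) < t → M i ω' = M i ω)))
          * (cPr w (fun ω' => A j ω' = A j ω)
              (fun ω' => L ω' = L ω ∧ (∀ i, i < j → A i ω' = A i ω)
                ∧ (∀ i : Fin (t + 1), (i : ℕ) < t → M i ω' = M i ω))
            / cPr w (fun ω' => A j ω' = A j ω)
                (fun ω' => L ω' = L ω ∧ (∀ i, i < j → A i ω' = A i ω)
                  ∧ (∀ i, M i ω' = M i ω))) := by
  intro ω
  -- positivity of the generalized events
  have hQ : ∀ (f : Fin (t + 1) → 𝓐) (MP : Ω → Prop),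
      (∀ ω', (∀ i, M i ω' = M i ω) → MP ω') → ∀ k,
      0 < Pr w (fun ω' => L ω' = L ω ∧ (∀ i : Fin (t + 1), (i : ℕ) < k → A i ω' = f i) ∧ MP ω') := by
    intro f MP hMP k
    refine lt_of_lt_of_le (hpos (L ω) f (fun i => M i ω)) (Pr_mono' w hw ?_)
    rintro ω' ⟨h1, h2, h3⟩
    exact ⟨h1, fun i _ => h2 i, hMP ω' h3⟩
  -- rewrite the mediator conditional probabilities
  have e_num : ∀ f : Fin (t + 1) → 𝓐,
      cPr w (fun ω' => M (Fin.last t) ω' = M (Fin.last t) ω)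
          (fun ω' => L ω' = L ω ∧ (∀ j, A j ω' = f j)
            ∧ (∀ j : Fin (t + 1), (j : ℕ) < t → M j ω' = M j ω))
        = Pr w (fun ω' => L ω' = L ω ∧ (∀ i : Fin (t + 1), (i : ℕ) < t + 1 → A i ω' = f i)
              ∧ (∀ i, M i ω' = M i ω))
          / Pr w (fun ω' => L ω' = L ω ∧ (∀ i : Fin (t + 1), (i : ℕ) < t + 1 → A i ω' = f i)
              ∧ (∀ i : Fin (t + 1), (i : ℕ) < t → M i ω' = M i ω)) := by
    intro f
    unfold cPr
    refine congrArg₂ (· / ·) ?_ ?_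
    · apply Pr_congr' w
      intro ω'
      constructor
      · rintro ⟨hm, h1, h2, h3⟩
        refine ⟨h1, fun i _ => h2 i, fun i => ?_⟩
        by_cases hi : (i : ℕ) < t
        · exact h3 i hi
        · have hieq : i = Fin.last t := by
            apply Fin.ext
            have := i.isLt
            simp only [Fin.val_last]
            omega
          rw [hieq]; exact hm
      · rintro ⟨h1, h2, h3⟩
        exact ⟨h3 (Fin.last t), h1, fun j => h2 j j.isLt, fun i _ => h3 i⟩
    · apply Pr_congr' w
      intro ω'
      constructor
      · rintro ⟨h1, h2, h3⟩
        exact ⟨h1, fun i _ => h2 i, h3⟩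
      · rintro ⟨h1, h2, h3⟩
        exact ⟨h1, fun j => h2 j j.isLt, h3⟩
  -- rewrite the exposure conditional probabilities
  have e_fac : ∀ (MP : Ω → Prop) (f : Fin (t + 1) → 𝓐) (j : Fin (t + 1)),
      cPr w (fun ω' => A j ω' = f j)
          (fun ω' => L ω' = L ω ∧ (∀ i, i < j → A i ω' = f i) ∧ MP ω')
        = Pr w (fun ω' => L ω' = L ω ∧ (∀ i : Fin (t + 1), (i : ℕ) < (j : ℕ) + 1 → A i ω' = f i)
              ∧ MP ω')
          / Pr w (fun ω' => L ω' = L ω ∧ (∀ i : Fin (t + 1), (i : ℕ) < (j : ℕ) → A i ω' = f i)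
              ∧ MP ω') := by
    intro MP f j
    unfold cPr
    refine congrArg₂ (· / ·) ?_ ?_
    · apply Pr_congr' w
      intro ω'
      constructor
      · rintro ⟨hj, h1, h2, h3⟩
        refine ⟨h1, fun i hi => ?_, h3⟩
        by_cases hij : (i : ℕ) < (j : ℕ)
        · exact h2 i (Fin.lt_def.mpr hij)
        · have : i = j := by apply Fin.ext; omega
          rw [this]; exact hj
      · rintro ⟨h1, h2, h3⟩
        exact ⟨h2 j (Nat.lt_succ_self _), h1,
          fun i hij => h2 i (Nat.lt_succ_of_lt (Fin.lt_def.mp hij)), h3⟩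
    · apply Pr_congr' w
      intro ω'
      constructor
      · rintro ⟨h1, h2, h3⟩
        exact ⟨h1, fun i hi => h2 i (Fin.lt_def.mpr hi), h3⟩
      · rintro ⟨h1, h2, h3⟩
        exact ⟨h1, fun i hi => h2 i (Fin.lt_def.mp hi), h3⟩
  have e_facF_b : ∀ j : Fin (t + 1),
      cPr w (fun ω' => A j ω' = A j ω)
          (fun ω' => L ω' = L ω ∧ (∀ i, i < j → A i ω' = A i ω) ∧ (∀ i, M i ω' = M i ω))
        = Pr w (fun ω' => L ω' = L ω ∧ (∀ i : Fin (t + 1), (i : ℕ) < (j : ℕ) + 1 → A i ω' = A i ω)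
              ∧ (∀ i, M i ω' = M i ω))
          / Pr w (fun ω' => L ω' = L ω ∧ (∀ i : Fin (t + 1), (i : ℕ) < (j : ℕ) → A i ω' = A i ω)
              ∧ (∀ i, M i ω' = M i ω)) :=
    fun j => e_fac _ (fun i => A i ω) j
  have e_facP_b : ∀ j : Fin (t + 1),
      cPr w (fun ω' => A j ω' = A j ω)
          (fun ω' => L ω' = L ω ∧ (∀ i, i < j → A i ω' = A i ω)
            ∧ (∀ i : Fin (t + 1), (i : ℕ) < t → M i ω' = M i ω))
        = Pr w (fun ω' => L ω' = L ω ∧ (∀ i : Fin (t + 1), (i : ℕ) < (j : ℕ) + 1 → A i ω' = A i ω)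
              ∧ (∀ i : Fin (t + 1), (i : ℕ) < t → M i ω' = M i ω))
          / Pr w (fun ω' => L ω' = L ω ∧ (∀ i : Fin (t + 1), (i : ℕ) < (j : ℕ) → A i ω' = A i ω)
              ∧ (∀ i : Fin (t + 1), (i : ℕ) < t → M i ω' = M i ω)) :=
    fun j => e_fac _ (fun i => A i ω) j
  simp only [e_num, e_fac, e_facF_b, e_facP_b]
  refine final_algebra (t + 1)
    (fun k => Pr w (fun ω' => L ω' = L ω ∧ (∀ i : Fin (t + 1), (i : ℕ) < k → A i ω' = abar i)
        ∧ (∀ i, M i ω' = M i ω)))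
    (fun k => Pr w (fun ω' => L ω' = L ω ∧ (∀ i : Fin (t + 1), (i : ℕ) < k → A i ω' = abar i)
        ∧ (∀ i : Fin (t + 1), (i : ℕ) < t → M i ω' = M i ω)))
    (fun k => Pr w (fun ω' => L ω' = L ω ∧ (∀ i : Fin (t + 1), (i : ℕ) < k → A i ω' = A i ω)
        ∧ (∀ i, M i ω' = M i ω)))
    (fun k => Pr w (fun ω' => L ω' = L ω ∧ (∀ i : Fin (t + 1), (i : ℕ) < k → A i ω' = A i ω)
        ∧ (∀ i : Fin (t + 1), (i : ℕ) < t → M i ω' = M i ω)))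
    (hQ abar _ (fun ω' h => h))
    (hQ abar _ (fun ω' h i _ => h i))
    (hQ (fun i => A i ω) _ (fun ω' h => h))
    (hQ (fun i => A i ω) _ (fun ω' h i _ => h i))
    ?_ ?_
  · exact Pr_congr' w (fun ω' => by
      constructor
      · rintro ⟨h1, _, h3⟩; exact ⟨h1, fun i hi => absurd hi (by omega), h3⟩
      · rintro ⟨h1, _, h3⟩; exact ⟨h1, fun i hi => absurd hi (by omega), h3⟩)
  · exact Pr_congr' w (fun ω' => by
      constructor
      · rintro ⟨h1, _, h3⟩; exact ⟨h1, fun i hi => absurd hi (by omega), h3⟩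
      · rintro ⟨h1, _, h3⟩; exact ⟨h1, fun i hi => absurd hi (by omega), h3⟩)
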